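/- arXiv:2112.13542 — 5 statements merged into one kernel-verified Lean document; each statement's English description precedes it below -/
import Mathlib

section
/- With data x₁ < ... < x_M, values z₁,...,z_M, and L_min = max_{2≤m≤M} |z_m-z_{m-1}|/(x_m-x_{m-1}): a point (x,y) ∈ ℝ² with x ∈ (x_{m-1}, x_m) lies on the graph of some L_min-Lipschitz interpolant of the data if and only if |y - z_{m-1}| ≤ L_min (x - x_{m-1}) and |y - z_m| ≤ L_min (x_m - x). -/
/-- characterization of the union of graphs of all L_min-Lipschitz
interpolants over the interval (x m, x (m+1)). -/
theorem mem_graph_union_iff (M : ℕ) (hM : 2 ≤ M) (x z : ℕ → ℝ)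
    (hx : ∀ m, m + 1 < M → x m < x (m + 1)) (Lmin : ℝ)
    (hLmin : IsGreatest
      {r : ℝ | ∃ m, m + 1 < M ∧ r = |z (m + 1) - z m| / (x (m + 1) - x m)} Lmin)
    (m : ℕ) (hm : m + 1 < M) (X Y : ℝ) (hX : X ∈ Set.Ioo (x m) (x (m + 1))) :
    (∃ f : ℝ → ℝ, (∀ k, k < M → f (x k) = z k) ∧
        (∀ a b : ℝ, |f a - f b| ≤ Lmin * |a - b|) ∧ f X = Y)
    ↔ (|Y - z m| ≤ Lmin * (X - x m) ∧ |Y - z (m + 1)| ≤ Lmin * (x (m + 1) - X)) := by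
  obtain ⟨hXm, hXm1⟩ := hX
  set L := Lmin with hLdef
  have hM0 : (0:ℕ) < M := by omega
  have h01 : (0:ℕ) + 1 < M := by omega
  have hLnn : 0 ≤ L := by
    have h := hLmin.2 ⟨0, h01, rfl⟩
    exact le_trans (div_nonneg (abs_nonneg _) (le_of_lt (sub_pos.2 (hx 0 h01)))) h
  have step : ∀ i, i + 1 < M → |z (i+1) - z i| ≤ L * (x (i+1) - x i) := by
    intro i hi
    have hgap : 0 < x (i+1) - x i := sub_pos.2 (hx i hi)
    exact (div_le_iff₀ hgap).mp (hLmin.2 ⟨i, hi, rfl⟩)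
  have mono : ∀ j k, j ≤ k → k < M → x j ≤ x k := by
    intro j k hjk
    induction k, hjk using Nat.le_induction with
    | base => exact fun _ => le_refl _
    | succ k hjk ih =>
      intro hk
      exact le_trans (ih (by omega)) (le_of_lt (hx k hk))
  have compat : ∀ j k, j ≤ k → k < M → |z k - z j| ≤ L * (x k - x j) := by
    intro j k hjk
    induction k, hjk using Nat.le_induction with
    | base => intro _; simp
    | succ k hjk ih =>
      intro hk
      have h1 := step k hk
      have h2 := ih (by omega)
      calc |z (k+1) - z j| ≤ |z (k+1) - z k| + |z k - z j| := abs_sub_le _ _ _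
        _ ≤ L * (x (k+1) - x k) + L * (x k - x j) := add_le_add h1 h2
        _ = L * (x (k+1) - x j) := by ring
  have compat' : ∀ j k, j < M → k < M → |z j - z k| ≤ L * |x j - x k| := by
    intro j k hj hk
    rcases le_total j k with h | h
    · rw [abs_sub_comm, abs_sub_comm (x j),
        abs_of_nonneg (sub_nonneg.2 (mono j k h hk))]
      exact compat j k h hk
    · rw [abs_of_nonneg (sub_nonneg.2 (mono k j h hj))]
      exact compat k j h hj
  constructor
  · rintro ⟨f, hf, hlip, hfX⟩
    constructor
    · have h := hlip X (x m)
      rw [hfX, hf m (by omega), abs_of_pos (sub_pos.2 hXm)] at h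
      exact h
    · have h := hlip X (x (m+1))
      rw [hfX, hf (m+1) hm, abs_sub_comm X, abs_of_pos (sub_pos.2 hXm1)] at h
      exact h
  · rintro ⟨h1, h2⟩
    have hYk : ∀ k, k < M → |Y - z k| ≤ L * |X - x k| := by
      intro k hk
      rcases le_or_gt k m with hkm | hkm
      · have hxk : x k ≤ x m := mono k m hkm (by omega)
        have hz : |z m - z k| ≤ L * (x m - x k) := compat k m hkm (by omega)
        rw [abs_of_pos (by linarith : (0:ℝ) < X - x k)]
        calc |Y - z k| ≤ |Y - z m| + |z m - z k| := abs_sub_le _ _ _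
          _ ≤ L * (X - x m) + L * (x m - x k) := add_le_add h1 hz
          _ = L * (X - x k) := by ring
      · have hm1k : m + 1 ≤ k := hkm
        have hxk : x (m+1) ≤ x k := mono (m+1) k hm1k hk
        have habs : |X - x k| = x k - X := by
          rw [abs_sub_comm]; exact abs_of_pos (by linarith)
        have hz : |z k - z (m+1)| ≤ L * (x k - x (m+1)) := compat (m+1) k hm1k hk
        rw [habs]
        calc |Y - z k| ≤ |Y - z (m+1)| + |z (m+1) - z k| := abs_sub_le _ _ _
          _ = |Y - z (m+1)| + |z k - z (m+1)| := by rw [abs_sub_comm (z (m+1))]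
          _ ≤ L * (x (m+1) - X) + L * (x k - x (m+1)) := add_le_add h2 hz
          _ = L * (x k - X) := by ring
    have hne : (Finset.range M).Nonempty := ⟨0, Finset.mem_range.2 hM0⟩
    set g : ℝ → ℝ := fun t =>
      min (Y + L * |t - X|)
        ((Finset.range M).inf' hne (fun k => z k + L * |t - x k|)) with hg
    refine ⟨g, ?_, ?_, ?_⟩
    · -- interpolation
      intro j hj
      apply le_antisymm
      · have h := Finset.inf'_le (f := fun k => z k + L * |x j - x k|)
          (b := j) (Finset.mem_range.2 hj)
        calc g (x j) ≤ (Finset.range M).inf' hne (fun k => z k + L * |x j - x k|) :=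
              min_le_right _ _
          _ ≤ z j + L * |x j - x j| := h
          _ = z j := by simp
      · apply le_min
        · have h := hYk j hj
          have h' : z j - Y ≤ |Y - z j| := by
            rw [abs_sub_comm]; exact le_abs_self _
          have : L * |X - x j| = L * |x j - X| := by rw [abs_sub_comm]
          linarith [this ▸ le_trans h' h]
        · apply Finset.le_inf'
          intro k hk
          have h := compat' j k hj (Finset.mem_range.mp hk)
          have h' : z j - z k ≤ |z j - z k| := le_abs_self _
          linarith
    · -- Lipschitz
      have key : ∀ a b : ℝ, g a ≤ g b + L * |a - b| := by
        intro a b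
        rcases le_total (Y + L * |b - X|)
            ((Finset.range M).inf' hne (fun k => z k + L * |b - x k|)) with h | h
        · have hgb : g b = Y + L * |b - X| := min_eq_left h
          rw [hgb]
          have htri := mul_le_mul_of_nonneg_left (abs_sub_le a b X) hLnn
          calc g a ≤ Y + L * |a - X| := min_le_left _ _
            _ ≤ Y + L * |b - X| + L * |a - b| := by rw [mul_add] at htri; linarith
        · have hgb : g b = (Finset.range M).inf' hne (fun k => z k + L * |b - x k|) :=
            min_eq_right h
          obtain ⟨k, hk, hEq⟩ :=
            Finset.exists_mem_eq_inf' hne (fun k => z k + L * |b - x k|)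
          rw [hgb, hEq]
          have htri := mul_le_mul_of_nonneg_left (abs_sub_le a b (x k)) hLnn
          calc g a ≤ (Finset.range M).inf' hne (fun k => z k + L * |a - x k|) :=
                min_le_right _ _
            _ ≤ z k + L * |a - x k| := Finset.inf'_le _ hk
            _ ≤ z k + L * |b - x k| + L * |a - b| := by rw [mul_add] at htri; linarith
      intro a b
      rw [abs_sub_le_iff]
      constructor
      · linarith [key a b]
      · have := key b a
        rw [abs_sub_comm b a] at this
        linarith
    · -- g X = Y
      apply le_antisymm
      · calc g X ≤ Y + L * |X - X| := min_le_left _ _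
          _ = Y := by simp
      · apply le_min
        · simp
        · apply Finset.le_inf'
          intro k hk
          have h := hYk k (Finset.mem_range.mp hk)
          have h' : Y - z k ≤ |Y - z k| := le_abs_self _
          linarith
end

section
/- Any continuous piecewise-linear interpolant of M ≥ 2 data points (x_m, z_m) with x₁ < ... < x_M has second-order total variation (total variation of its derivative) at least Σ_{m=2}^{M-1} | s_m − s_{m-1} |, where s_m = (z_{m+1}-z_m)/(x_{m+1}-x_m). In other words, the canonical interpolant minimizes the second-order total variation among all piecewise-linear interpolants. -/
/-!
By the mean value theorem (which survives finitely many knots), each interval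
`(x m, x (m + 1))` contains a point where `g ≤ s m` and one where `s m ≤ g`. Walking along
the intervals and always picking the point on the side of `s m` away from `s (m + 1)`, the
jumps of `g` between consecutive chosen points dominate the jumps of `s`: along a monotone run
of `s` the overshoot carries over to the next step, and at a turning point of `s` it only
grows. The chosen points increase, so these jumps are bounded by the total variation of `g`.
-/

open Set Finset

theorem lt_of_hasDerivAt_pos_off_finset {f f' : ℝ → ℝ} {a b : ℝ} (hab : a < b)
    (hf : ContinuousOn f (Icc a b)) (K : Finset ℝ)
    (hderiv : ∀ t ∈ Ioo a b, t ∉ K → HasDerivAt f (f' t) t)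
    (hpos : ∀ t ∈ Ioo a b, t ∉ K → 0 < f' t) : f a < f b := by
  induction K using Finset.induction_on generalizing a b with
  | empty =>
    refine strictMonoOn_of_deriv_pos (convex_Icc a b) hf (fun t ht => ?_)
      (left_mem_Icc.2 hab.le) (right_mem_Icc.2 hab.le) hab
    rw [interior_Icc] at ht
    rw [(hderiv t ht (Finset.notMem_empty t)).deriv]
    exact hpos t ht (Finset.notMem_empty t)
  | insert c K _ ih =>
    have hK : ∀ {t}, t ∉ K → t ≠ c → t ∉ insert c K := fun h hc => by simp [h, hc]
    by_cases hc : c ∈ Ioo a b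
    · have hac : f a < f c := ih hc.1 (hf.mono (Icc_subset_Icc_right hc.2.le))
        (fun t ht htK => hderiv t ⟨ht.1, ht.2.trans hc.2⟩ (hK htK ht.2.ne))
        (fun t ht htK => hpos t ⟨ht.1, ht.2.trans hc.2⟩ (hK htK ht.2.ne))
      have hcb : f c < f b := ih hc.2 (hf.mono (Icc_subset_Icc_left hc.1.le))
        (fun t ht htK => hderiv t ⟨hc.1.trans ht.1, ht.2⟩ (hK htK ht.1.ne'))
        (fun t ht htK => hpos t ⟨hc.1.trans ht.1, ht.2⟩ (hK htK ht.1.ne'))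
      exact hac.trans hcb
    · exact ih hab hf (fun t ht htK => hderiv t ht (hK htK (ne_of_mem_of_not_mem ht hc)))
        (fun t ht htK => hpos t ht (hK htK (ne_of_mem_of_not_mem ht hc)))

theorem exists_le_slope_of_hasDerivAt_off_finset {f f' : ℝ → ℝ} {a b : ℝ} (hab : a < b)
    (hf : ContinuousOn f (Icc a b)) (K : Finset ℝ)
    (hderiv : ∀ t ∈ Ioo a b, t ∉ K → HasDerivAt f (f' t) t) :
    ∃ t ∈ Ioo a b, f' t ≤ (f b - f a) / (b - a) := by
  by_contra! hgt
  set C := (f b - f a) / (b - a)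
  have hlt : f a - C * a < f b - C * b :=
    lt_of_hasDerivAt_pos_off_finset (f' := fun t => f' t - C) hab
      (hf.sub (continuousOn_const.mul continuousOn_id)) K
      (fun t ht htK => (hderiv t ht htK).sub ((hasDerivAt_id t).const_mul C) |>.congr_deriv
        (by ring))
      (fun t ht _ => sub_pos.2 (hgt t ht))
  have hC : C * (b - a) = f b - f a := div_mul_cancel₀ _ (sub_ne_zero.2 hab.ne')
  linarith

theorem exists_slope_le_of_hasDerivAt_off_finset {f f' : ℝ → ℝ} {a b : ℝ} (hab : a < b)
    (hf : ContinuousOn f (Icc a b)) (K : Finset ℝ)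
    (hderiv : ∀ t ∈ Ioo a b, t ∉ K → HasDerivAt f (f' t) t) :
    ∃ t ∈ Ioo a b, (f b - f a) / (b - a) ≤ f' t := by
  obtain ⟨t, ht, hle⟩ := exists_le_slope_of_hasDerivAt_off_finset (f := -f) (f' := -f') hab
    hf.neg K (fun t ht htK => (hderiv t ht htK).neg)
  refine ⟨t, ht, ?_⟩
  simp only [Pi.neg_apply, neg_sub_neg] at hle
  rw [← neg_sub, neg_div] at hle
  linarith

/-- The `if` term is the overshoot of `a (n + 1)` past `s (n + 1)` in the direction of the
last jump of `s`. -/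
theorem sum_abs_sub_add_slack_le (s a : ℕ → ℝ) (n : ℕ)
    (hup : ∀ m ≤ n, s m ≤ s (m + 1) → a m ≤ s m)
    (hdown : ∀ m ≤ n, s (m + 1) < s m → s m ≤ a m) :
    ∑ m ∈ range (n + 1), |s (m + 1) - s m| +
        (if s n ≤ s (n + 1) then a (n + 1) - s (n + 1) else s (n + 1) - a (n + 1)) ≤
      ∑ m ∈ range (n + 1), |a (m + 1) - a m| := by
  induction n with
  | zero =>
    simp only [zero_add, range_one, sum_singleton]
    rcases le_or_gt (s 0) (s 1) with h | h
    · have := hup 0 le_rfl h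
      rw [if_pos h, abs_of_nonneg (sub_nonneg.2 h)]
      linarith [le_abs_self (a 1 - a 0)]
    · have := hdown 0 le_rfl h
      rw [if_neg h.not_ge, abs_of_neg (sub_neg.2 h)]
      linarith [neg_abs_le (a 1 - a 0)]
  | succ n ih =>
    have ih := ih (fun m hm => hup m (by omega)) (fun m hm => hdown m (by omega))
    rw [sum_range_succ, sum_range_succ _ (n + 1)]
    have := le_abs_self (a (n + 2) - a (n + 1))
    have := neg_abs_le (a (n + 2) - a (n + 1))
    rcases le_or_gt (s (n + 1)) (s (n + 2)) with h | h
    · have := hup (n + 1) le_rfl h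
      rw [if_pos h, abs_of_nonneg (sub_nonneg.2 h)]
      split_ifs at ih <;> linarith
    · have := hdown (n + 1) le_rfl h
      rw [if_neg h.not_ge, abs_of_neg (sub_neg.2 h)]
      split_ifs at ih <;> linarith

theorem exists_sum_abs_sub_le_of_le_le {α : Type*} (φ : α → ℝ) (s : ℕ → ℝ) (u v : ℕ → α)
    (n : ℕ) (hu : ∀ m ≤ n + 1, φ (u m) ≤ s m) (hv : ∀ m ≤ n + 1, s m ≤ φ (v m)) :
    ∃ w : ℕ → α, (∀ m, w m = u m ∨ w m = v m) ∧
      ∑ m ∈ range (n + 1), |s (m + 1) - s m| ≤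
        ∑ m ∈ range (n + 1), |φ (w (m + 1)) - φ (w m)| := by
  -- the last point is placed so that its overshoot `hlast` is nonnegative
  set w : ℕ → α := fun m => if m ≤ n then (if s m ≤ s (m + 1) then u m else v m)
    else if s n ≤ s (n + 1) then v m else u m
  refine ⟨w, fun m => by grind, ?_⟩
  have hslack := sum_abs_sub_add_slack_le s (φ ∘ w) n
    (fun m hm h => by simpa [w, hm, h] using hu m (by omega))
    (fun m hm h => by simpa [w, hm, h.not_ge] using hv m (by omega))
  have hlast : 0 ≤ if s n ≤ s (n + 1) then φ (w (n + 1)) - s (n + 1)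
      else s (n + 1) - φ (w (n + 1)) := by
    split_ifs with h
    · simpa [w, h] using hv (n + 1) le_rfl
    · simpa [w, h] using hu (n + 1) le_rfl
  simp only [Function.comp_apply] at hslack
  linarith

theorem ofReal_sum_abs_sub_le_eVariationOn {α : Type*} [LinearOrder α] (g : α → ℝ)
    {w : ℕ → α} {n : ℕ} (hw : MonotoneOn w (Set.Iic n)) :
    ENNReal.ofReal (∑ m ∈ range n, |g (w (m + 1)) - g (w m)|) ≤ eVariationOn g univ := by
  rw [ENNReal.ofReal_sum_of_nonneg fun _ _ => abs_nonneg _]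
  simp only [← Real.dist_eq, ← edist_dist]
  exact eVariationOn.sum_le_of_monotoneOn_Iic hw fun _ _ => mem_univ _

theorem secondTV_ge_sum_slope_jumps_general (M : ℕ) (x z : ℕ → ℝ)
    (hx : ∀ m, m + 1 < M → x m < x (m + 1))
    (s : ℕ → ℝ) (hs : ∀ m, s m = (z (m + 1) - z m) / (x (m + 1) - x m))
    (f g : ℝ → ℝ) (hfc : Continuous f)
    (K : Finset ℝ) (hder : ∀ t : ℝ, t ∉ K → HasDerivAt f (g t) t)
    (hint : ∀ m, m < M → f (x m) = z m) :
    ENNReal.ofReal (∑ m ∈ Finset.range (M - 2), |s (m + 1) - s m|) ≤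
      eVariationOn g Set.univ := by
  rcases lt_or_ge M 3 with hM | hM
  · simp [show M - 2 = 0 by omega]
  obtain ⟨n, rfl⟩ : ∃ n, M = n + 3 := ⟨M - 3, by omega⟩
  have hslope : ∀ m, m + 1 < n + 3 → (f (x (m + 1)) - f (x m)) / (x (m + 1) - x m) = s m :=
    fun m hm => by rw [hint m (by omega), hint (m + 1) hm, hs]
  have hlow : ∀ m, m + 1 < n + 3 → ∃ t ∈ Ioo (x m) (x (m + 1)), g t ≤ s m := fun m hm =>
    hslope m hm ▸ exists_le_slope_of_hasDerivAt_off_finset (hx m hm) hfc.continuousOn K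
      fun t _ ht => hder t ht
  have hhigh : ∀ m, m + 1 < n + 3 → ∃ t ∈ Ioo (x m) (x (m + 1)), s m ≤ g t := fun m hm =>
    hslope m hm ▸ exists_slope_le_of_hasDerivAt_off_finset (hx m hm) hfc.continuousOn K
      fun t _ ht => hder t ht
  choose! u hu_mem hu using hlow
  choose! v hv_mem hv using hhigh
  obtain ⟨w, hw, hsum⟩ := exists_sum_abs_sub_le_of_le_le g s u v n
    (fun m hm => hu m (by omega)) (fun m hm => hv m (by omega))
  have hw_mem : ∀ m ≤ n + 1, w m ∈ Ioo (x m) (x (m + 1)) := fun m hm => by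
    rcases hw m with h | h <;> rw [h]
    exacts [hu_mem m (by omega), hv_mem m (by omega)]
  have hw_mono : StrictMonoOn w (Set.Iic (n + 1)) :=
    strictMonoOn_Iic_of_lt_succ fun m hm => (hw_mem m hm.le).2.trans (hw_mem (m + 1) hm).1
  exact (ENNReal.ofReal_le_ofReal hsum).trans
    (ofReal_sum_abs_sub_le_eVariationOn g hw_mono.monotoneOn)

/-- any continuous piecewise-linear interpolant (continuous, differentiable
with derivative g off a finite knot set) has second-order total variation at least the
sum of the absolute jumps of the secant slopes. -/
theorem secondTV_ge_sum_slope_jumps (M : ℕ) (hM : 2 ≤ M) (x z : ℕ → ℝ)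
    (hx : ∀ m, m + 1 < M → x m < x (m + 1))
    (s : ℕ → ℝ) (hs : ∀ m, s m = (z (m + 1) - z m) / (x (m + 1) - x m))
    (f g : ℝ → ℝ) (hfc : Continuous f)
    (K : Finset ℝ) (hder : ∀ t : ℝ, t ∉ K → HasDerivAt f (g t) t)
    (hint : ∀ m, m < M → f (x m) = z m) :
    ENNReal.ofReal (∑ m ∈ Finset.range (M - 2), |s (m + 1) - s m|) ≤
      eVariationOn g Set.univ :=
  secondTV_ge_sum_slope_jumps_general M x z hx s hs f g hfc K hder hint
end

section
/- Let M ≥ 2 and let (x_m, z_m), m = 1,...,M, be data with x₁ < ... < x_M such that no three consecutive points are collinear and such that the second differences a_m = s_m − s_{m-1} (with s_m = (z_{m+1}-z_m)/(x_{m+1}-x_m)) all have the same strict sign for m = 2,...,M−1. Then any continuous piecewise-linear interpolant of the data has at least ⌈M/2⌉ − 1 knots (breakpoints). -/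
/-- if the second differences of the data all have the same strict sign,
then any continuous piecewise-linear interpolant has at least ⌈M/2⌉ - 1 knots. -/
theorem min_knots_of_strict_sign (M : ℕ) (hM : 2 ≤ M) (x z : ℕ → ℝ)
    (hx : ∀ m, m + 1 < M → x m < x (m + 1))
    (s : ℕ → ℝ) (hs : ∀ m, s m = (z (m + 1) - z m) / (x (m + 1) - x m))
    (hsign : (∀ m, 1 ≤ m → m + 1 < M → s (m - 1) < s m) ∨
             (∀ m, 1 ≤ m → m + 1 < M → s m < s (m - 1)))
    (f : ℝ → ℝ) (K : Finset ℝ)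
    (haff : ∀ a b : ℝ, a < b → (∀ t ∈ Set.Ioo a b, t ∉ K) →
      ∃ c d : ℝ, ∀ t ∈ Set.Icc a b, f t = c * t + d)
    (hint : ∀ m, m < M → f (x m) = z m) :
    (M + 1) / 2 - 1 ≤ K.card := by
  classical
  -- x is strictly increasing on indices < M
  have xlt : ∀ i j : ℕ, i < j → j < M → x i < x j := by
    intro i j hij hj
    induction j with
    | zero => omega
    | succ n ih =>
      rcases Nat.lt_or_ge i n with h | h
      · exact (ih h (by omega)).trans (hx n hj)
      · have hin : i = n := by omega
        subst hin
        exact hx i hj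
  set N := (M + 1) / 2 - 1 with hN
  -- each window contains a knot
  have hchoice : ∀ k, k < N → ∃ t ∈ K, x (2 * k) < t ∧ t < x (2 * k + 2) := by
    intro k hk
    have hkM : 2 * k + 2 < M := by omega
    have h01 : x (2 * k) < x (2 * k + 1) := hx _ (by omega)
    have h12 : x (2 * k + 1) < x (2 * k + 2) := hx _ hkM
    by_contra hcon
    push_neg at hcon
    have hnok : ∀ t ∈ Set.Ioo (x (2 * k)) (x (2 * k + 2)), t ∉ K := by
      intro t ht htK
      exact absurd ht.2 (not_lt.mpr (hcon t htK ht.1))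
    obtain ⟨c, d, hcd⟩ := haff (x (2 * k)) (x (2 * k + 2)) (h01.trans h12) hnok
    have hz : ∀ m, 2 * k ≤ m → m ≤ 2 * k + 2 → z m = c * x m + d := by
      intro m h1 h2
      have hxm : x (2 * k) ≤ x m ∧ x m ≤ x (2 * k + 2) := by
        constructor
        · rcases Nat.eq_or_lt_of_le h1 with h | h
          · simp [h]
          · exact le_of_lt (xlt _ _ h (by omega))
        · rcases Nat.eq_or_lt_of_le h2 with h | h
          · simp [h]
          · exact le_of_lt (xlt _ _ h hkM)
      rw [← hint m (by omega)]
      exact hcd _ ⟨hxm.1, hxm.2⟩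
    have hsc : ∀ m, 2 * k ≤ m → m + 1 ≤ 2 * k + 2 → s m = c := by
      intro m h1 h2
      have hne : x (m + 1) - x m ≠ 0 :=
        sub_ne_zero.mpr (ne_of_gt (hx m (by omega)))
      rw [hs m, hz m h1 (by omega), hz (m + 1) (by omega) h2]
      field_simp
      ring
    have e1 : s (2 * k) = c := hsc _ le_rfl (by omega)
    have e2 : s (2 * k + 1) = c := hsc _ (by omega) le_rfl
    rcases hsign with h | h
    · have := h (2 * k + 1) (by omega) (by omega)
      simp only [Nat.add_sub_cancel] at this
      rw [e1, e2] at this; exact lt_irrefl c this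
    · have := h (2 * k + 1) (by omega) (by omega)
      simp only [Nat.add_sub_cancel] at this
      rw [e1, e2] at this; exact lt_irrefl c this
  -- choose a knot per window
  choose g hgK hg1 hg2 using hchoice
  -- define total function
  have : N ≤ K.card := by
    have hmaps : ∀ k ∈ Finset.range N, (if h : k < N then g k h else 0) ∈ K := by
      intro k hk
      rw [Finset.mem_range] at hk
      simp [hk, hgK]
    have hinj : Set.InjOn (fun k => if h : k < N then g k h else 0) (Finset.range N) := by
      intro a ha b hb hab
      rw [Finset.coe_range, Set.mem_Iio] at ha hb
      simp only [dif_pos ha, dif_pos hb] at hab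
      by_contra hne
      have key : ∀ p q (hp : p < N) (hq : q < N), p < q → g p hp < g q hq := by
        intro p q hp hq hpq
        have h1 : g p hp < x (2 * p + 2) := hg2 p hp
        have h2 : x (2 * q) < g q hq := hg1 q hq
        have h3 : x (2 * p + 2) ≤ x (2 * q) := by
          rcases Nat.eq_or_lt_of_le (show 2 * p + 2 ≤ 2 * q by omega) with h | h
          · simp [h]
          · exact le_of_lt (xlt _ _ h (by omega))
        linarith
      rcases Nat.lt_or_ge a b with h | h
      · exact absurd hab (ne_of_lt (key a b ha hb h))
      · have : b < a := by omega
        exact absurd hab.symm (ne_of_lt (key b a hb ha this))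
    calc N = (Finset.range N).card := (Finset.card_range N).symm
    _ ≤ K.card := Finset.card_le_card_of_injOn _ hmaps hinj
  exact this
end

section
/- For any two-layer ReLU network f_θ(x) = c₀ + c₁ x + Σ_{k=1}^{K} v_k ReLU(w_k x − b_k), the weight-decay penalty R(θ) = Σ_k (v_k² + w_k²)/2 satisfies R(θ) ≥ Σ_k |v_k||w_k| ≥ TV²(f_θ), where TV²(f_θ) is the total variation of the derivative of f_θ. -/
/-! Away from its kinks the network is differentiable, with derivative `c₁` plus a sum of
half-line steps `t ↦ v_k w_k · 1[w_k t ≥ b_k]`. Each step is `v_k w_k` times a monotone or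
antitone `0`–`1` function, so its variation is at most `|v_k w_k|`; variation is subadditive,
which gives `TV(f') ≤ ∑ |v_k| |w_k|`, and AM–GM bounds each term by `(v_k² + w_k²) / 2`. -/

open Set Finset

section Variation

variable {α E : Type*} [LinearOrder α] [SeminormedAddCommGroup E]

theorem eVariationOn_const_add (c : E) (f : α → E) (s : Set α) :
    eVariationOn (fun x => c + f x) s = eVariationOn f s := by
  simp only [eVariationOn, edist_add_left]

theorem eVariationOn_add_le (f g : α → E) (s : Set α) :
    eVariationOn (fun x => f x + g x) s ≤ eVariationOn f s + eVariationOn g s := by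
  refine iSup_le fun ⟨n, u, hu, us⟩ => ?_
  calc ∑ i ∈ range n, edist (f (u (i + 1)) + g (u (i + 1))) (f (u i) + g (u i))
      ≤ ∑ i ∈ range n, (edist (f (u (i + 1))) (f (u i)) + edist (g (u (i + 1))) (g (u i))) :=
        sum_le_sum fun i _ => edist_add_add_le _ _ _ _
    _ = ∑ i ∈ range n, edist (f (u (i + 1))) (f (u i)) +
          ∑ i ∈ range n, edist (g (u (i + 1))) (g (u i)) := sum_add_distrib
    _ ≤ eVariationOn f s + eVariationOn g s :=
        add_le_add (eVariationOn.sum_le hu us) (eVariationOn.sum_le hu us)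

theorem eVariationOn_sum_le {ι : Type*} (t : Finset ι) (f : ι → α → E) (s : Set α) :
    eVariationOn (fun x => ∑ i ∈ t, f i x) s ≤ ∑ i ∈ t, eVariationOn (f i) s := by
  classical
  induction t using Finset.induction_on with
  | empty =>
    simp only [sum_empty, nonpos_iff_eq_zero]
    exact eVariationOn.constant_on (subsingleton_singleton (a := (0 : E)) |>.anti
      (image_subset_iff.2 fun _ _ => rfl))
  | insert j t hj ih =>
    simp only [sum_insert hj]
    exact (eVariationOn_add_le _ _ s).trans (add_le_add le_rfl ih)

theorem Monotone.eVariationOn_univ_le {f : α → ℝ} {C : ℝ} (hf : Monotone f)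
    (hC : ∀ x y, f y - f x ≤ C) : eVariationOn f univ ≤ ENNReal.ofReal C := by
  rw [eVariationOn.eq_biSup_inter_Icc]
  refine iSup₂_le fun p _ => ?_
  rw [(hf.monotoneOn univ).eVariationOn_eq trivial trivial]
  exact ENNReal.ofReal_le_ofReal (hC _ _)

end Variation

theorem eVariationOn_heaviside_comp_le {φ : ℝ → ℝ} (hφ : Monotone φ ∨ Antitone φ) :
    eVariationOn (fun t => if 0 ≤ φ t then (1 : ℝ) else 0) univ ≤ 1 := by
  set H : ℝ → ℝ := fun s => if 0 ≤ s then 1 else 0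
  have hH : eVariationOn H univ ≤ 1 := by
    have hmono : Monotone H := fun x y hxy => by
      simp only [H]; split_ifs <;> linarith
    simpa using hmono.eVariationOn_univ_le (C := 1) fun x y => by
      simp only [H]; split_ifs <;> norm_num
  refine le_trans ?_ hH
  rcases hφ with hφ | hφ
  · exact eVariationOn.comp_le_of_monotoneOn H φ (hφ.monotoneOn _) (mapsTo_univ _ _)
  · exact eVariationOn.comp_le_of_antitoneOn H φ (hφ.antitoneOn _) (mapsTo_univ _ _)

theorem eVariationOn_ite_affine_le (w b c : ℝ) :
    eVariationOn (fun t => if 0 ≤ w * t - b then c else 0) univ ≤ ENNReal.ofReal |c| := by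
  have hφ : Monotone (fun t => w * t - b) ∨ Antitone (fun t => w * t - b) := by
    rcases le_total 0 w with hw | hw
    · exact .inl fun x y hxy => by dsimp only; nlinarith
    · exact .inr fun x y hxy => by dsimp only; nlinarith
  have hconst : eVariationOn (fun _ : ℝ => c) univ = 0 := eVariationOn.constant_on (by simp)
  calc eVariationOn (fun t => if 0 ≤ w * t - b then c else 0) univ
      = eVariationOn (fun t => c * if 0 ≤ w * t - b then (1 : ℝ) else 0) univ := by
        simp only [mul_ite, mul_one, mul_zero]
    _ ≤ ‖c‖ₑ * eVariationOn (fun t => if 0 ≤ w * t - b then (1 : ℝ) else 0) univ +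
          1 * eVariationOn (fun _ => c) univ :=
        eVariationOn_fun_mul_le (fun _ _ => le_rfl) (fun t _ => by split_ifs <;> simp)
    _ ≤ ‖c‖ₑ * 1 + 1 * 0 := by
        rw [hconst]
        gcongr
        exact eVariationOn_heaviside_comp_le hφ
    _ = ENNReal.ofReal |c| := by simp [Real.enorm_eq_ofReal_abs]

theorem hasDerivAt_max_zero {y : ℝ} (hy : y ≠ 0) :
    HasDerivAt (fun z : ℝ => max z 0) (if 0 ≤ y then 1 else 0) y := by
  rcases hy.lt_or_gt with hy | hy
  · rw [if_neg hy.not_ge]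
    exact (hasDerivAt_const y 0).congr_of_eventuallyEq <|
      (eventually_lt_nhds hy).mono fun z hz => max_eq_right hz.le
  · rw [if_pos hy.le]
    exact (hasDerivAt_id y).congr_of_eventuallyEq <|
      (eventually_gt_nhds hy).mono fun z hz => max_eq_left hz.le

theorem hasDerivAt_relu_neuron {v w b t : ℝ} (ht : w * t - b ≠ 0) :
    HasDerivAt (fun x => v * max (w * x - b) 0) (if 0 ≤ w * t - b then v * w else 0) t := by
  have haffine : HasDerivAt (fun x => w * x - b) w t := by
    simpa using ((hasDerivAt_id t).const_mul w).sub_const b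
  refine (((hasDerivAt_max_zero ht).comp t haffine).const_mul v).congr_deriv ?_
  split_ifs <;> simp

/-- for a two-layer ReLU network, the weight-decay penalty dominates
Σ|v_k||w_k|, which dominates the second-order total variation of the network
(the total variation of its step-function derivative). -/
theorem weight_decay_ge_secondTV (K : ℕ) (c₀ c₁ : ℝ) (v w b : Fin K → ℝ) :
    (∀ t : ℝ, (∀ k, w k * t - b k ≠ 0) →
      HasDerivAt (fun x : ℝ => c₀ + c₁ * x + ∑ k, v k * max (w k * x - b k) 0)
        (c₁ + ∑ k, if 0 ≤ w k * t - b k then v k * w k else 0) t) ∧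
    eVariationOn
        (fun t : ℝ => c₁ + ∑ k, if 0 ≤ w k * t - b k then v k * w k else 0) Set.univ
      ≤ ENNReal.ofReal (∑ k, |v k| * |w k|) ∧
    (∑ k, |v k| * |w k|) ≤ ∑ k, (v k ^ 2 + w k ^ 2) / 2 := by
  refine ⟨fun t ht => ?_, ?_, sum_le_sum fun k _ => ?_⟩
  · simpa using (((hasDerivAt_id t).const_mul c₁).const_add c₀).fun_add
      (HasDerivAt.fun_sum fun k _ => hasDerivAt_relu_neuron (v := v k) (ht k))
  · rw [eVariationOn_const_add, ENNReal.ofReal_sum_of_nonneg fun k _ => by positivity]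
    refine (eVariationOn_sum_le _ _ _).trans (sum_le_sum fun k _ => ?_)
    simpa [abs_mul] using eVariationOn_ite_affine_le (w k) (b k) (v k * w k)
  · have := two_mul_le_add_sq |v k| |w k|
    rw [sq_abs, sq_abs] at this
    linarith
end

section
/- Let x₁ < ... < x_M with M ≥ 3 and z ∈ ℝ^M. Suppose f : ℝ → ℝ interpolates the data, is affine outside [x₂, x_{M−1}] matching the canonical interpolant there, and on each interval [x_m, x_{m+1}] (2 ≤ m ≤ M−2) either coincides with the canonical interpolant or is convex or concave on [x_{m−1}, x_{m+2}]. Then the Lipschitz constant of f equals L_min = max_{2≤m≤M} |z_m − z_{m−1}|/(x_m − x_{m−1}). -/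
private lemma affine_bound' {L s0 : ℝ} (hs : |s0| ≤ L) (f : ℝ → ℝ) (c x0 : ℝ) (S : Set ℝ)
    (hf : ∀ t ∈ S, f t = c + s0 * (t - x0)) :
    ∀ a ∈ S, ∀ b ∈ S, |f a - f b| ≤ L * |a - b| := by
  intro a ha b hb
  rw [hf a ha, hf b hb]
  have e : c + s0 * (a - x0) - (c + s0 * (b - x0)) = s0 * (a - b) := by ring
  rw [e, abs_mul]
  exact mul_le_mul_of_nonneg_right hs (abs_nonneg _)

private lemma convex_piece_bound' (f : ℝ → ℝ) {p q r t L : ℝ} (hpq : p < q) (hqr : q < r)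
    (hrt : r < t) (hcv : ConvexOn ℝ (Set.Icc p t) f)
    (hlo : -L ≤ (f q - f p) / (q - p)) (hhi : (f t - f r) / (t - r) ≤ L) :
    ∀ a ∈ Set.Icc q r, ∀ b ∈ Set.Icc q r, |f a - f b| ≤ L * |a - b| := by
  have hpt : p < t := hpq.trans (hqr.trans hrt)
  suffices H : ∀ a ∈ Set.Icc q r, ∀ b ∈ Set.Icc q r, a ≤ b → |f a - f b| ≤ L * |a - b| by
    intro a ha b hb
    rcases le_total a b with h | h
    · exact H a ha b hb h
    · rw [abs_sub_comm (f a), abs_sub_comm a]; exact H b hb a ha h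
  intro a ha b hb hab
  rcases eq_or_lt_of_le hab with rfl | hab
  · simp
  have hma : a ∈ Set.Icc p t := ⟨hpq.le.trans ha.1, ha.2.trans hrt.le⟩
  have hmb : b ∈ Set.Icc p t := ⟨hpq.le.trans hb.1, hb.2.trans hrt.le⟩
  have hmp : p ∈ Set.Icc p t := ⟨le_refl _, hpt.le⟩
  have hmt : t ∈ Set.Icc p t := ⟨hpt.le, le_refl _⟩
  have hmq : q ∈ Set.Icc p t := ⟨hpq.le, (hqr.trans hrt).le⟩
  have hmr : r ∈ Set.Icc p t := ⟨(hpq.trans hqr).le, hrt.le⟩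
  have hpa : p < a := hpq.trans_le ha.1
  have hbt : b < t := hb.2.trans_lt hrt
  have l1 : (f q - f p) / (q - p) ≤ (f b - f p) / (b - p) :=
    hcv.secant_mono hmp hmq hmb (ne_of_gt hpq) (ne_of_gt (hpa.trans hab)) (ha.1.trans hab.le)
  have l2 : (f p - f b) / (p - b) ≤ (f a - f b) / (a - b) :=
    hcv.secant_mono hmb hmp hma (ne_of_lt (hpa.trans hab)) (ne_of_lt hab) hpa.le
  have e1 : (f p - f b) / (p - b) = (f b - f p) / (b - p) := by
    rw [← neg_div_neg_eq]; ring_nf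
  have e2 : (f a - f b) / (a - b) = (f b - f a) / (b - a) := by
    rw [← neg_div_neg_eq]; ring_nf
  have lower : -L ≤ (f b - f a) / (b - a) := by
    rw [← e2]; rw [e1] at l2; linarith
  have u1 : (f b - f a) / (b - a) ≤ (f t - f a) / (t - a) :=
    hcv.secant_mono hma hmb hmt (ne_of_gt hab) (ne_of_gt (hab.trans hbt))
      (hb.2.trans hrt.le)
  have u2 : (f a - f t) / (a - t) ≤ (f r - f t) / (r - t) :=
    hcv.secant_mono hmt hma hmr (ne_of_lt (hab.trans hbt)) (ne_of_lt hrt) ha.2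
  have e3 : (f a - f t) / (a - t) = (f t - f a) / (t - a) := by
    rw [← neg_div_neg_eq]; ring_nf
  have e4 : (f r - f t) / (r - t) = (f t - f r) / (t - r) := by
    rw [← neg_div_neg_eq]; ring_nf
  have upper : (f b - f a) / (b - a) ≤ L := by
    rw [e3, e4] at u2; linarith
  have hba : 0 < b - a := by linarith
  rw [abs_sub_comm (f a), abs_sub_comm a, abs_of_pos hba, abs_le]
  constructor
  · have h := (le_div_iff₀ hba).mp lower
    linarith
  · exact (div_le_iff₀ hba).mp upper

private lemma lip_step' {L : ℝ} {f : ℝ → ℝ} {c d : ℝ} (hcd : c ≤ d)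
    (h1 : ∀ a b : ℝ, a ≤ c → b ≤ c → |f a - f b| ≤ L * |a - b|)
    (h2 : ∀ a ∈ Set.Icc c d, ∀ b ∈ Set.Icc c d, |f a - f b| ≤ L * |a - b|) :
    ∀ a b : ℝ, a ≤ d → b ≤ d → |f a - f b| ≤ L * |a - b| := by
  suffices H : ∀ a b : ℝ, a ≤ b → b ≤ d → |f a - f b| ≤ L * |a - b| by
    intro a b ha hb
    rcases le_total a b with h | h
    · exact H a b h hb
    · rw [abs_sub_comm (f a), abs_sub_comm a]; exact H b a h ha
  intro a b hab hbd
  rcases le_total b c with h | h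
  · exact h1 a b (hab.trans h) h
  rcases le_total a c with h' | h'
  · calc |f a - f b| ≤ |f a - f c| + |f c - f b| := abs_sub_le _ _ _
      _ ≤ L * |a - c| + L * |c - b| :=
        add_le_add (h1 a c h' le_rfl) (h2 c ⟨le_rfl, hcd⟩ b ⟨h, hbd⟩)
      _ = L * |a - b| := by
        rw [abs_of_nonpos (by linarith : a - c ≤ 0), abs_of_nonpos (by linarith : c - b ≤ 0),
          abs_of_nonpos (by linarith : a - b ≤ 0)]
        ring
  · exact h2 a ⟨h', hab.trans hbd⟩ b ⟨h, hbd⟩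

private lemma lip_glue' {L : ℝ} {f : ℝ → ℝ} {c : ℝ}
    (h1 : ∀ a b : ℝ, a ≤ c → b ≤ c → |f a - f b| ≤ L * |a - b|)
    (h2 : ∀ a b : ℝ, c ≤ a → c ≤ b → |f a - f b| ≤ L * |a - b|) :
    ∀ a b : ℝ, |f a - f b| ≤ L * |a - b| := by
  suffices H : ∀ a b : ℝ, a ≤ b → |f a - f b| ≤ L * |a - b| by
    intro a b
    rcases le_total a b with h | h
    · exact H a b h
    · rw [abs_sub_comm (f a), abs_sub_comm a]; exact H b a h
  intro a b hab
  rcases le_total b c with h | h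
  · exact h1 a b (hab.trans h) h
  rcases le_total a c with h' | h'
  · calc |f a - f b| ≤ |f a - f c| + |f c - f b| := abs_sub_le _ _ _
      _ ≤ L * |a - c| + L * |c - b| := add_le_add (h1 a c h' le_rfl) (h2 c b le_rfl h)
      _ = L * |a - b| := by
        rw [abs_of_nonpos (by linarith : a - c ≤ 0), abs_of_nonpos (by linarith : c - b ≤ 0),
          abs_of_nonpos (by linarith : a - b ≤ 0)]
        ring
  · exact h2 a b h' (h'.trans (by linarith))

/-- an interpolant matching the canonical interpolant outside
[x₂, x_{M-1}] and on each interior interval either canonical or convex/concave on the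
surrounding interval has Lipschitz constant exactly L_min. -/
theorem lipschitz_eq_Lmin_of_convex_pieces (M : ℕ) (hM : 3 ≤ M) (x z : ℕ → ℝ)
    (hx : ∀ m, m + 1 < M → x m < x (m + 1))
    (s : ℕ → ℝ) (hs : ∀ m, s m = (z (m + 1) - z m) / (x (m + 1) - x m))
    (Lmin : ℝ)
    (hLmin : IsGreatest
      {r : ℝ | ∃ m, m + 1 < M ∧ r = |z (m + 1) - z m| / (x (m + 1) - x m)} Lmin)
    (f : ℝ → ℝ) (hfc : Continuous f)
    (hint : ∀ m, m < M → f (x m) = z m)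
    (hleft : ∀ t : ℝ, t ≤ x 1 → f t = z 0 + s 0 * (t - x 0))
    (hright : ∀ t : ℝ, x (M - 2) ≤ t → f t = z (M - 2) + s (M - 2) * (t - x (M - 2)))
    (hmid : ∀ m, 1 ≤ m → m + 2 < M →
      (∀ t ∈ Set.Icc (x m) (x (m + 1)), f t = z m + s m * (t - x m)) ∨
      ConvexOn ℝ (Set.Icc (x (m - 1)) (x (m + 2))) f ∨
      ConcaveOn ℝ (Set.Icc (x (m - 1)) (x (m + 2))) f) :
    (∀ a b : ℝ, |f a - f b| ≤ Lmin * |a - b|) ∧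
    ∀ L : ℝ, (∀ a b : ℝ, |f a - f b| ≤ L * |a - b|) → Lmin ≤ L := by
  obtain ⟨⟨m0, hm0, hm0e⟩, hub⟩ := hLmin
  have hxpos : ∀ m, m + 1 < M → 0 < x (m + 1) - x m := fun m hm => sub_pos.mpr (hx m hm)
  have hsabs : ∀ m, m + 1 < M → |s m| ≤ Lmin := by
    intro m hm
    rw [hs, abs_div, abs_of_pos (hxpos m hm)]
    exact hub ⟨m, hm, rfl⟩
  -- slope at grid points
  have hslope : ∀ m, m + 1 < M → (f (x (m + 1)) - f (x m)) / (x (m + 1) - x m) = s m := by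
    intro m hm
    rw [hint (m + 1) hm, hint m (by omega), hs]
  -- bound on each middle piece
  have hmidb : ∀ m, 1 ≤ m → m + 2 < M →
      ∀ a ∈ Set.Icc (x m) (x (m + 1)), ∀ b ∈ Set.Icc (x m) (x (m + 1)),
        |f a - f b| ≤ Lmin * |a - b| := by
    intro m h1 h2
    have hm1 : m - 1 + 1 = m := Nat.sub_add_cancel h1
    have hxm1 : x (m - 1) < x m := by
      have := hx (m - 1) (by omega); rwa [hm1] at this
    have hxm2 : x m < x (m + 1) := hx m (by omega)
    have hxm3 : x (m + 1) < x (m + 2) := hx (m + 1) (by omega)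
    have hsl1 : (f (x m) - f (x (m - 1))) / (x m - x (m - 1)) = s (m - 1) := by
      have := hslope (m - 1) (by omega); rwa [hm1] at this
    have hsl2 : (f (x (m + 2)) - f (x (m + 1))) / (x (m + 2) - x (m + 1)) = s (m + 1) :=
      hslope (m + 1) (by omega)
    have ha1 : |s (m - 1)| ≤ Lmin := hsabs (m - 1) (by omega)
    have ha2 : |s (m + 1)| ≤ Lmin := hsabs (m + 1) (by omega)
    rcases hmid m h1 h2 with hc | hcv | hcc
    · exact affine_bound' (hsabs m (by omega)) f (z m) (x m) _ hc
    · exact convex_piece_bound' (L := Lmin) f hxm1 hxm2 hxm3 hcv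
        (by rw [hsl1]; linarith [(abs_le.mp ha1).1])
        (by rw [hsl2]; linarith [(abs_le.mp ha2).2])
    · have key := convex_piece_bound' (L := Lmin) (fun u => -f u) hxm1 hxm2 hxm3 hcc.neg
        (by
          show -Lmin ≤ (-f (x m) - -f (x (m - 1))) / (x m - x (m - 1))
          have e : (-f (x m) - -f (x (m - 1))) / (x m - x (m - 1)) =
              -((f (x m) - f (x (m - 1))) / (x m - x (m - 1))) := by ring
          rw [e, hsl1]; linarith [(abs_le.mp ha1).2])
        (by
          show (-f (x (m + 2)) - -f (x (m + 1))) / (x (m + 2) - x (m + 1)) ≤ Lmin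
          have e : (-f (x (m + 2)) - -f (x (m + 1))) / (x (m + 2) - x (m + 1)) =
              -((f (x (m + 2)) - f (x (m + 1))) / (x (m + 2) - x (m + 1))) := by ring
          rw [e, hsl2]; linarith [(abs_le.mp ha2).1])
      intro a ha b hb
      have h := key a ha b hb
      have e5 : (fun u => -f u) a - (fun u => -f u) b = -(f a - f b) := by simp; ring
      rwa [e5, abs_neg] at h
  -- left-of-x_k bound by induction
  have key : ∀ k, 1 ≤ k → k ≤ M - 2 →
      ∀ a b : ℝ, a ≤ x k → b ≤ x k → |f a - f b| ≤ Lmin * |a - b| := by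
    intro k hk
    induction k, hk using Nat.le_induction with
    | base =>
      intro _ a b ha hb
      exact affine_bound' (hsabs 0 (by omega)) f (z 0) (x 0) (Set.Iic (x 1))
        (fun t ht => hleft t ht) a (Set.mem_Iic.mpr ha) b (Set.mem_Iic.mpr hb)
    | succ n hn ih =>
      intro hn2
      have hn3 : n + 2 < M := by omega
      exact lip_step' (hx n (by omega)).le (ih (by omega)) (hmidb n hn hn3)
  have hleftAll := key (M - 2) (by omega) le_rfl
  have hrightAll : ∀ a b : ℝ, x (M - 2) ≤ a → x (M - 2) ≤ b →
      |f a - f b| ≤ Lmin * |a - b| := by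
    intro a b ha hb
    have hs2 : |s (M - 2)| ≤ Lmin := by
      have := hsabs (M - 2) (by omega); exact this
    exact affine_bound' hs2 f (z (M - 2)) (x (M - 2)) (Set.Ici (x (M - 2)))
      (fun t ht => hright t ht) a (Set.mem_Ici.mpr ha) b (Set.mem_Ici.mpr hb)
  constructor
  · exact lip_glue' hleftAll hrightAll
  · intro L hL
    have hpos := hxpos m0 hm0
    have hfb := hL (x (m0 + 1)) (x m0)
    rw [hint (m0 + 1) hm0, hint m0 (by omega), abs_of_pos hpos] at hfb
    rw [hm0e, div_le_iff₀ hpos]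
    exact hfb
end
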